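/- arXiv:1705.00059 — 2 statements merged into one kernel-verified Lean document; each statement's English description precedes it below -/
import Mathlib

section
/- Equip the space of flows 𝔽 with the cylindrical σ-field A. Then the shift map θ : ℝ × 𝔽 → 𝔽, θ(h,f) = θ_h f where (θ_h f)(s,x;t) = f(s+h, x; t+h), is jointly measurable (with respect to B(ℝ) ⊗ A and A), and the evaluation map φ : [0,∞) × 𝔽 × ℝ → ℝ, φ(t,f,x) = f(0,x;t), is jointly measurable in all its arguments. -/
/-- The range of the flow `f` at time `s`. -/
def rangeAt (f : ℝ → ℝ → ℝ → ℝ) (s : ℝ) : Set ℝ :=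
  {y | ∃ r x : ℝ, r < s ∧ f r x s = y}

/-- `f` belongs to the space of flows 𝔽. -/
def IsFlow (f : ℝ → ℝ → ℝ → ℝ) : Prop :=
  (∀ s x : ℝ, f s x s = x) ∧
  (∀ s x : ℝ, ContinuousOn (fun t => f s x t) (Set.Ici s)) ∧
  (∀ r s t x : ℝ, r ≤ s → s ≤ t → f s (f r x s) t = f r x t) ∧
  (∀ s : ℝ, Dense (rangeAt f s)) ∧
  (∀ s t : ℝ, s ≤ t → ∀ x ∉ rangeAt f s,
    ContinuousWithinAt (fun y => f s y t) (Set.Ici x) x) ∧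
  (∀ s t x : ℝ, s < t → ∃ r y : ℝ, r < t ∧ y ∉ rangeAt f r ∧ f s x t = f r y t)

/-- The space of flows 𝔽. -/
abbrev FlowSpace := {f : ℝ → ℝ → ℝ → ℝ // IsFlow f}

/-- The cylindrical σ-field 𝒜 on 𝔽. -/
instance : MeasurableSpace FlowSpace :=
  ⨆ (s : ℝ) (x : ℝ) (t : ℝ) (_ : s ≤ t),
    MeasurableSpace.comap (fun f : FlowSpace => f.1 s x t) inferInstance

/-- The shift `θ_h`: `(θ_h f)(s,x;t) = f(s+h, x; t+h)`. -/
def shift (h : ℝ) (f : ℝ → ℝ → ℝ → ℝ) : ℝ → ℝ → ℝ → ℝ :=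
  fun s x t => f (s + h) x (t + h)

/-!
Trajectories cannot cross (if they did they would meet, and then coalesce by (F1)), so
`x ↦ f(s,x;t)` is monotone. For `s ≤ t` this gives
  `f(s,x;t) < c ↔ ∃ q v ∈ ℚ, q < s ∧ x ≤ f(q,v;s) ∧ f(q,v;t) < c`:
right-continuity off the range (F3) and density of the range (F2) give a point `p ≥ x` of `R_s`
with `f(s,p;t) < c`; by (F4) it lies on a trajectory started at some `(r,y)` with `y ∉ R_r`, and
by (F3) again a trajectory started slightly above `y` still ends below `c`; shortly after `r` the two
are apart, leaving room for a trajectory started at a rational point. Hence `f(s,x;t)` is determined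
by countably many trajectories, each continuous in time and measurable in the flow, and evaluation
at measurably varying `(s,x,t)` is measurable.
-/
open Set Filter Topology

namespace IsFlow

variable {f : ℝ → ℝ → ℝ → ℝ} {r s t x y c : ℝ}

theorem apply_self (hf : IsFlow f) (s x : ℝ) : f s x s = x := hf.1 s x

theorem continuousOn_apply (hf : IsFlow f) (s x : ℝ) : ContinuousOn (f s x) (Ici s) :=
  hf.2.1 s x

theorem apply_apply (hf : IsFlow f) (x : ℝ) (hrs : r ≤ s) (hst : s ≤ t) :
    f s (f r x s) t = f r x t :=
  hf.2.2.1 r s t x hrs hst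

theorem monotone_apply (hf : IsFlow f) (hst : s ≤ t) : Monotone fun x => f s x t := by
  intro x y hxy
  by_contra! hlt
  obtain ⟨u, hu, hmeet⟩ : ∃ u ∈ Icc s t, (f s x - f s y) u = 0 :=
    intermediate_value_Icc hst
      (((hf.continuousOn_apply s x).sub (hf.continuousOn_apply s y)).mono Icc_subset_Ici_self)
      ⟨by simp only [Pi.sub_apply, hf.apply_self]; linarith, by simp only [Pi.sub_apply]; linarith⟩
  have hcoalesce := congrArg (fun z => f u z t) (sub_eq_zero.mp hmeet)
  simp only [hf.apply_apply _ hu.1 hu.2] at hcoalesce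
  linarith

theorem exists_rat_trajectory_between (hf : IsFlow f) {a a' b b' q : ℝ} (ha : a ≤ q)
    (ha' : a' ≤ q) (h : f a b q < f a' b' q) :
    ∃ v : ℚ, ∀ τ, q ≤ τ → f a b τ ≤ f q v τ ∧ f q v τ ≤ f a' b' τ := by
  obtain ⟨v, hv, hv'⟩ := exists_rat_btwn h
  refine ⟨v, fun τ hτ => ⟨?_, ?_⟩⟩
  · rw [← hf.apply_apply b ha hτ]
    exact hf.monotone_apply hτ hv.le
  · rw [← hf.apply_apply b' ha' hτ]
    exact hf.monotone_apply hτ hv'.le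

theorem exists_forall_Ico_apply_lt (hf : IsFlow f) (hst : s ≤ t) (hx : x ∉ rangeAt f s)
    (hc : f s x t < c) : ∃ u, x < u ∧ ∀ z ∈ Ico x u, f s z t < c := by
  obtain ⟨u, hxu, hu⟩ := mem_nhdsGE_iff_exists_Ico_subset.mp
    ((hf.2.2.2.2.1 s t hst x hx).preimage_mem_nhdsWithin (Iio_mem_nhds hc))
  exact ⟨u, hxu, hu⟩

theorem exists_rat_of_notMem_rangeAt (hf : IsFlow f) (hrs : r < s) (hst : s ≤ t)
    (hy : y ∉ rangeAt f r) (hc : f r y t < c) :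
    ∃ q v : ℚ, (q : ℝ) < s ∧ f r y s ≤ f q v s ∧ f q v t < c := by
  obtain ⟨u, hyu, hu⟩ := hf.exists_forall_Ico_apply_lt (hrs.le.trans hst) hy hc
  obtain ⟨z, hyz, hzu⟩ := exists_between hyu
  have hapart : ∀ᶠ τ in 𝓝[>] r, f r y τ < f r z τ := by
    refine Eventually.filter_mono (nhdsWithin_mono _ Ioi_subset_Ici_self) ?_
    refine ((hf.continuousOn_apply r y).continuousWithinAt self_mem_Ici).eventually_lt
      ((hf.continuousOn_apply r z).continuousWithinAt self_mem_Ici) ?_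
    rwa [hf.apply_self, hf.apply_self]
  obtain ⟨w, hrw, hw⟩ := mem_nhdsGT_iff_exists_Ioo_subset.mp hapart
  obtain ⟨q, hrq, hq⟩ := exists_rat_btwn (lt_min hrw hrs)
  have hqs : (q : ℝ) < s := hq.trans_le (min_le_right _ _)
  obtain ⟨v, hv⟩ := hf.exists_rat_trajectory_between hrq.le hrq.le
    (hw ⟨hrq, hq.trans_le (min_le_left _ _)⟩)
  exact ⟨q, v, hqs, (hv s hqs.le).1,
    (hv t (hqs.le.trans hst)).2.trans_lt (hu z ⟨hyz.le, hzu⟩)⟩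

theorem exists_mem_rangeAt_le_apply_lt (hf : IsFlow f) (hst : s ≤ t) (hc : f s x t < c) :
    ∃ p ∈ rangeAt f s, x ≤ p ∧ f s p t < c := by
  by_cases hx : x ∈ rangeAt f s
  · exact ⟨x, hx, le_rfl, hc⟩
  · obtain ⟨u, hxu, hu⟩ := hf.exists_forall_Ico_apply_lt hst hx hc
    obtain ⟨p, hp, hxp, hpu⟩ := (hf.2.2.2.1 s).exists_between hxu
    exact ⟨p, hp, hxp.le, hu p ⟨hxp.le, hpu⟩⟩

theorem exists_notMem_rangeAt_of_mem_rangeAt (hf : IsFlow f) {p : ℝ} (hp : p ∈ rangeAt f s) :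
    ∃ r < s, ∃ y ∉ rangeAt f r, f r y s = p := by
  obtain ⟨r₀, x₀, hr₀, rfl⟩ := hp
  obtain ⟨r, y, hr, hy, h⟩ := hf.2.2.2.2.2 r₀ s x₀ hr₀
  exact ⟨r, hr, y, hy, h.symm⟩

theorem apply_lt_iff_exists_rat (hf : IsFlow f) (hst : s ≤ t) :
    f s x t < c ↔ ∃ q v : ℚ, (q : ℝ) < s ∧ x ≤ f q v s ∧ f q v t < c := by
  constructor
  · intro hc
    obtain ⟨p, hp, hxp, hpc⟩ := hf.exists_mem_rangeAt_le_apply_lt hst hc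
    obtain ⟨r, hrs, y, hy, rfl⟩ := hf.exists_notMem_rangeAt_of_mem_rangeAt hp
    rw [hf.apply_apply y hrs.le hst] at hpc
    obtain ⟨q, v, hqs, hyv, hvc⟩ := hf.exists_rat_of_notMem_rangeAt hrs hst hy hpc
    exact ⟨q, v, hqs, hxp.trans hyv, hvc⟩
  · rintro ⟨q, v, hqs, hxv, hvc⟩
    calc f s x t ≤ f s (f q v s) t := hf.monotone_apply hst hxv
      _ = f q v t := hf.apply_apply _ hqs.le hst
      _ < c := hvc

end IsFlow

theorem measurable_flowSpace_iff {Ω : Type*} [MeasurableSpace Ω] {Φ : Ω → FlowSpace} :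
    Measurable Φ ↔ ∀ s x t, s ≤ t → Measurable fun ω => (Φ ω).1 s x t := by
  simp only [measurable_iff_comap_le, instMeasurableSpaceFlowSpace,
    MeasurableSpace.comap_iSup, MeasurableSpace.comap_comp, iSup_le_iff]
  rfl

theorem measurable_flowSpace_apply {s t : ℝ} (hst : s ≤ t) (x : ℝ) :
    Measurable fun g : FlowSpace => g.1 s x t :=
  measurable_flowSpace_iff.mp measurable_id s x t hst

-- Clamping the time at `q` extends `t ↦ f(q,v;t)`, continuous only on `[q, ∞)`, continuously to `ℝ`.
theorem measurable_apply_sup (q v : ℝ) :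
    Measurable fun p : ℝ × FlowSpace => p.2.1 q v (p.1 ⊔ q) :=
  MeasureTheory.measurable_uncurry_of_continuous_of_measurable
    (fun g => (g.2.continuousOn_apply q v).comp_continuous (continuous_id.sup continuous_const)
      fun _ => mem_Ici.mpr le_sup_right)
    (fun _ => measurable_flowSpace_apply le_sup_right v)

theorem Measurable.flowSpace_apply {Ω : Type*} [MeasurableSpace Ω] {Φ : Ω → FlowSpace}
    {S X T : Ω → ℝ} (hΦ : Measurable Φ) (hS : Measurable S) (hX : Measurable X)
    (hT : Measurable T) (hST : ∀ ω, S ω ≤ T ω) :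
    Measurable fun ω => (Φ ω).1 (S ω) (X ω) (T ω) := by
  have hclamp : ∀ (q v : ℚ) {U : Ω → ℝ}, Measurable U →
      Measurable fun ω => (Φ ω).1 q v (U ω ⊔ q) :=
    fun q v _ hU => (measurable_apply_sup q v).comp (hU.prodMk hΦ)
  refine measurable_of_Iio fun c => ?_
  have hpre : (fun ω => (Φ ω).1 (S ω) (X ω) (T ω)) ⁻¹' Iio c = ⋃ p : ℚ × ℚ,
      {ω | (p.1 : ℝ) < S ω ∧ X ω ≤ (Φ ω).1 p.1 p.2 (S ω ⊔ p.1) ∧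
        (Φ ω).1 p.1 p.2 (T ω ⊔ p.1) < c} := by
    ext ω
    simp only [mem_preimage, mem_Iio, (Φ ω).2.apply_lt_iff_exists_rat (hST ω), mem_iUnion,
      mem_ofPred_eq, Prod.exists]
    refine exists₂_congr fun q v => and_congr_right fun hq => ?_
    rw [sup_eq_left.mpr hq.le, sup_eq_left.mpr (hq.le.trans (hST ω))]
  rw [hpre]
  exact MeasurableSet.iUnion fun p => (measurableSet_lt measurable_const hS).inter
    ((measurableSet_le hX (hclamp p.1 p.2 hS)).inter (hclamp p.1 p.2 hT measurableSet_Iio))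

/-- the shift map `θ : ℝ × 𝔽 → 𝔽` (any map realizing
`(h,f) ↦ θ_h f` in 𝔽) is jointly measurable, and the evaluation map
`φ : [0,∞) × 𝔽 × ℝ → ℝ`, `φ(t,f,x) = f(0,x;t)`, is jointly measurable. -/
theorem measurable_shift_and_phi (Θ : ℝ × FlowSpace → FlowSpace)
    (hΘ : ∀ q : ℝ × FlowSpace, ((Θ q : FlowSpace) : ℝ → ℝ → ℝ → ℝ) = shift q.1 q.2.1) :
    Measurable Θ ∧
    Measurable (fun q : {t : ℝ // 0 ≤ t} × FlowSpace × ℝ =>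
      q.2.1.1 0 q.2.2 q.1.1) := by
  constructor
  · refine measurable_flowSpace_iff.mpr fun s x t hst => ?_
    simp only [hΘ, shift]
    exact measurable_snd.flowSpace_apply (measurable_const.add measurable_fst) measurable_const
      (measurable_const.add measurable_fst) fun q => by linarith
  · exact (measurable_fst.comp measurable_snd).flowSpace_apply measurable_const
      (measurable_snd.comp measurable_snd) (measurable_subtype_coe.comp measurable_fst)
      fun q => q.1.2
end

section
/- Let Ω = [0,1]² with the Borel σ-field and two-dimensional Lebesgue measure P, and define ψ_{1,2}(ω₁,ω₂;x) = ω₂ if x ≠ ω₁ and ψ_{1,2}(ω₁,ω₂;x) = ω₁ if x = ω₁, for x ∈ [0,1]. Then every set A in the σ-field σ(ψ_{1,2}(·;x) : x ∈ [0,1]) differs from a product set by a null set: there exists a Borel set B ⊆ [0,1] with P(A △ ([0,1] × B)) = 0. -/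
open MeasureTheory

/-- The unit interval `[0,1]`. -/
abbrev unitI : Set ℝ := Set.Icc (0 : ℝ) 1

/-- Ω = [0,1]², with Borel σ-field and two-dimensional Lebesgue measure `volume`. -/
abbrev SampleSpace : Type := unitI × unitI

/-- `ψ_{1,2}(ω₁,ω₂;x) = ω₂` if `x ≠ ω₁`, `= ω₁` if `x = ω₁`. -/
noncomputable def psi12 (ω : SampleSpace) (x : unitI) : ℝ :=
  if (x : ℝ) = (ω.1 : ℝ) then (ω.1 : ℝ) else (ω.2 : ℝ)

/-- σ-field generated by the family `ω ↦ ψ_{1,2}(ω;x)`, `x ∈ [0,1]`. -/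
noncomputable def sigma12 : MeasurableSpace SampleSpace :=
  ⨆ x : unitI, MeasurableSpace.comap (fun ω => psi12 ω x) inferInstance

lemma singleton_null (x : unitI) : volume ({x} : Set unitI) = 0 := by
  rw [MeasureTheory.Measure.Subtype.volume_def,
    MeasureTheory.Measure.comap_apply _ Subtype.coe_injective
      (fun s hs => MeasurableSet.subtype_image measurableSet_Icc hs) _ (measurableSet_singleton x)]
  simp

lemma line_null (x : unitI) : volume {ω : SampleSpace | ω.1 = x} = 0 := by
  have h : {ω : SampleSpace | ω.1 = x} = ({x} : Set unitI) ×ˢ (Set.univ : Set unitI) := by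
    ext ω
    simp only [Set.mem_setOf_eq, Set.mem_prod, Set.mem_singleton_iff, Set.mem_univ, and_true]
  rw [h, Measure.volume_eq_prod, Measure.prod_prod, singleton_null, zero_mul]

/-- The collection of sets that agree a.e. with a product set `[0,1] × B` is a σ-field. -/
def goodSets : MeasurableSpace SampleSpace where
  MeasurableSet' A := ∃ B : Set unitI, MeasurableSet B ∧ volume (symmDiff A (Set.univ ×ˢ B)) = 0
  measurableSet_empty := ⟨∅, MeasurableSet.empty, by simp⟩
  measurableSet_compl := by
    rintro A ⟨B, hB, h0⟩
    refine ⟨Bᶜ, hB.compl, ?_⟩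
    have h : (Set.univ ×ˢ Bᶜ : Set SampleSpace) = (Set.univ ×ˢ B)ᶜ := by ext ω; simp
    rw [h, compl_symmDiff_compl]
    exact h0
  measurableSet_iUnion := by
    intro s hs
    choose B hB h0 using hs
    refine ⟨⋃ i, B i, MeasurableSet.iUnion hB, ?_⟩
    have hsub : symmDiff (⋃ i, s i) (Set.univ ×ˢ ⋃ i, B i) ⊆
        ⋃ i, symmDiff (s i) (Set.univ ×ˢ B i) := by
      intro ω hω
      rw [Set.mem_symmDiff] at hω
      rcases hω with ⟨h1, hn⟩ | ⟨⟨_, hi⟩, hn⟩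
      · obtain ⟨i, hi⟩ := Set.mem_iUnion.1 h1
        exact Set.mem_iUnion.2 ⟨i, Set.mem_symmDiff.2 (Or.inl ⟨hi, fun h => hn ⟨trivial, Set.mem_iUnion.2 ⟨i, h.2⟩⟩⟩)⟩
      · obtain ⟨i, hi⟩ := Set.mem_iUnion.1 hi
        exact Set.mem_iUnion.2 ⟨i, Set.mem_symmDiff.2 (Or.inr ⟨⟨trivial, hi⟩, fun h => hn (Set.mem_iUnion.2 ⟨i, h⟩)⟩)⟩
    exact measure_mono_null hsub (measure_iUnion_null h0)

/-- every set in `σ(ψ_{1,2}(⋅;x) : x ∈ [0,1])` differs from a product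
set `[0,1] × B` by a null set. -/
theorem sigma12_sets_almost_product :
    ∀ A : Set SampleSpace, MeasurableSet[sigma12] A →
      ∃ B : Set unitI, MeasurableSet B ∧
        volume (symmDiff A (Set.univ ×ˢ B)) = 0 := by
  intro A hA
  have hle : sigma12 ≤ goodSets := by
    rw [sigma12]
    refine iSup_le fun x => ?_
    rintro A ⟨S, hS, rfl⟩
    refine ⟨Subtype.val ⁻¹' S, measurable_subtype_coe hS, ?_⟩
    refine measure_mono_null ?_ (line_null x)
    intro ω hω
    by_contra hne
    have hx : (x : ℝ) ≠ (ω.1 : ℝ) := fun h => hne (Subtype.ext h.symm)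
    have hiff : ω ∈ (fun ω => psi12 ω x) ⁻¹' S ↔
        ω ∈ (Set.univ ×ˢ (Subtype.val ⁻¹' S) : Set SampleSpace) := by
      simp [psi12, hx, Set.mem_prod]
    rw [Set.mem_symmDiff] at hω
    rcases hω with ⟨h1, h2⟩ | ⟨h1, h2⟩
    · exact h2 (hiff.1 h1)
    · exact h2 (hiff.2 h1)
  exact hle A hA
end
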